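/- In the icosahedron graph, for any two distinct vertices u and u′ and any set consisting of u′ together with its 5 neighbors (i.e., N[u′]), at most 3 of the 5 neighbors of u belong to N[u′]; consequently, given two vertices u′₁, u′₂ distinct from u, it is possible that N[u′₁] ∪ N[u′₂] covers all 5 neighbors of u, but a single closed neighborhood never does. -/

import Mathlib

open SimpleGraph Finset

/-- Edge list of the icosahedron: apex `0`, upper pentagon `1`–`5`, lower pentagon
`6`–`10`, apex `11`, with antiprism edges between the pentagons. -/
def icoEdges : List (Fin 12 × Fin 12) :=
  [(0,1),(0,2),(0,3),(0,4),(0,5),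
   (1,2),(2,3),(3,4),(4,5),(5,1),
   (6,7),(7,8),(8,9),(9,10),(10,6),
   (11,6),(11,7),(11,8),(11,9),(11,10),
   (1,6),(1,7),(2,7),(2,8),(3,8),(3,9),(4,9),(4,10),(5,10),(5,6)]

/-- The icosahedron graph: the 5-regular planar graph on 12 vertices that is the
1-skeleton of the regular icosahedron. -/
def icosahedron : SimpleGraph (Fin 12) where
  Adj u v := (u, v) ∈ icoEdges ∨ (v, u) ∈ icoEdges
  symm := ⟨fun u v h => Or.symm h⟩
  loopless := ⟨by decide⟩

instance : DecidableRel icosahedron.Adj := fun u v =>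
  inferInstanceAs (Decidable ((u, v) ∈ icoEdges ∨ (v, u) ∈ icoEdges))

/-!
Two distinct vertices of the icosahedron have at most two common neighbours, so the
closed neighbourhood `N[u']` meets `N(u)` in at most those two vertices plus `u'` itself.
Since `u` has five neighbours, `N[u']` cannot contain all of them. For the cover by two
closed neighbourhoods take two non-adjacent neighbours of `u`.
-/

namespace SimpleGraph

variable {V : Type*} [Fintype V] [DecidableEq V] (G : SimpleGraph V) [DecidableRel G.Adj]

theorem card_neighborFinset_inter_insert_le {u u' : V} {k : ℕ}
    (h : (G.neighborFinset u ∩ G.neighborFinset u').card ≤ k) :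
    (G.neighborFinset u ∩ insert u' (G.neighborFinset u')).card ≤ k + 1 := by
  calc (G.neighborFinset u ∩ insert u' (G.neighborFinset u')).card
      ≤ (insert u' (G.neighborFinset u ∩ G.neighborFinset u')).card := by
        rw [insert_inter_distrib]
        exact card_le_card (inter_subset_inter_right (subset_insert _ _))
    _ ≤ k + 1 := (card_insert_le _ _).trans (Nat.add_le_add_right h 1)

theorem not_neighborFinset_subset_of_card_inter_lt_degree {u : V} {s : Finset V}
    (h : (G.neighborFinset u ∩ s).card < G.degree u) : ¬ G.neighborFinset u ⊆ s := by
  intro hsub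
  rw [inter_eq_left.mpr hsub, card_neighborFinset_eq_degree] at h
  exact lt_irrefl _ h

end SimpleGraph

theorem icosahedron_degree (u : Fin 12) : icosahedron.degree u = 5 := by
  revert u
  decide

theorem icosahedron_card_commonNeighbors_le {u u' : Fin 12} (h : u ≠ u') :
    (icosahedron.neighborFinset u ∩ icosahedron.neighborFinset u').card ≤ 2 := by
  revert u u'
  decide

/-- In the icosahedron, a single closed neighborhood `N[u']` (with `u' ≠ u`) never
covers all 5 neighbors of `u` (it contains at most 3 of them), but two closed
neighborhoods can cover all 5 neighbors of `u`. -/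
theorem icosahedron_closed_neighborhood_cover :
    (∀ u u' : Fin 12, u ≠ u' →
      (icosahedron.neighborFinset u ∩ insert u' (icosahedron.neighborFinset u')).card ≤ 3) ∧
    (∀ u u' : Fin 12, u ≠ u' →
      ¬ icosahedron.neighborFinset u ⊆ insert u' (icosahedron.neighborFinset u')) ∧
    (∃ u u'₁ u'₂ : Fin 12, u'₁ ≠ u ∧ u'₂ ≠ u ∧
      icosahedron.neighborFinset u ⊆
        insert u'₁ (icosahedron.neighborFinset u'₁) ∪
          insert u'₂ (icosahedron.neighborFinset u'₂)) := by
  have at_most_three : ∀ u u' : Fin 12, u ≠ u' →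
      (icosahedron.neighborFinset u ∩ insert u' (icosahedron.neighborFinset u')).card ≤ 3 :=
    fun u u' h =>
      icosahedron.card_neighborFinset_inter_insert_le (icosahedron_card_commonNeighbors_le h)
  refine ⟨at_most_three, fun u u' h => ?_, ⟨0, 1, 3, by decide, by decide, by decide⟩⟩
  apply icosahedron.not_neighborFinset_subset_of_card_inter_lt_degree
  rw [icosahedron_degree u]
  exact Nat.lt_of_le_of_lt (at_most_three u u' h) (by norm_num)
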